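/- Suppose ∇f is L₁-Lipschitz on E with L₁ > 0, the Hessian map x ↦ ∇²f(x) is L₂-Lipschitz in operator norm with L₂ > 0, the Luo–Tseng error bound holds, the IRPN iteration hypotheses hold, ρ = 1, c ≥ κ·L₂, and η ≤ κ²·L₂/(2(L₁+1)). Then the sequence {x^k} converges to some x* ∈ X, and the convergence is at least Q-quadratic: there exist C > 0 and an integer k₀ ≥ 0 such that ‖x^{k+1} − x*‖ ≤ C·‖x^k − x*‖² for all k ≥ k₀. -/

import Mathlib

/-!
Far from the solution, the Armijo backtracking accepts a step of length bounded below in terms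
of the regularization `μ = c r`, and the inexact model decrease controls `μ ‖d‖²`; together
with `(1 - η) r ≤ (2 + L₁ + μ) ‖d‖` this makes `F` drop by a fixed amount as long as the residual
`r` stays above any given level. Since `F` is bounded below, `r (xᵏ)` eventually gets small.

Near the solution, the Luo–Tseng bound gives a minimizer within `κ r` of `xᵏ`. Comparing the
optimality condition of the inexact subproblem with that of this minimizer bounds the step:
`L₂ ‖d‖ ≤ 3 (1 + (ζ - θ)) c r`, where `c ≥ κ L₂` and `η ≤ κ² L₂ / (2 (L₁ + 1))` are exactly
what is needed to reach the factor `3`. This is small enough for the cubic Taylor remainder to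
be absorbed, so the unit step is accepted, and then `r (xᵏ⁺¹) = O(r (xᵏ)²)`. Hence `r` decays
quadratically, the steps are summable, `xᵏ` converges to some `x*` with `‖xᵏ - x*‖ = O(r (xᵏ))`,
`x* ∈ X` by the error bound, and `r (xᵏ) ≤ (2 + L₁) ‖xᵏ - x*‖` closes the quadratic estimate.
-/

open Filter Set Metric Topology
open scoped RealInnerProductSpace

lemma HasDerivAt.nonneg_of_forall_Ioc_le {φ : ℝ → ℝ} {D : ℝ} (hφ : HasDerivAt φ D 0)
    (hmin : ∀ t ∈ Ioc (0:ℝ) 1, φ 0 ≤ φ t) : 0 ≤ D := by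
  have hloc : IsLocalMinOn φ (Icc 0 1) 0 := IsMinOn.localize fun t ht =>
    (eq_or_lt_of_le ht.1).elim (fun h => by simp [← h]) fun h => hmin t ⟨h, ht.2⟩
  have hcone : (1:ℝ) - 0 ∈ posTangentConeAt (Icc (0:ℝ) 1) 0 :=
    sub_mem_posTangentConeAt_of_segment_subset (segment_eq_Icc zero_le_one).subset
  simpa using hloc.hasFDerivWithinAt_nonneg hφ.hasFDerivAt.hasFDerivWithinAt hcone

section Calculus

variable {V : Type*} [NormedAddCommGroup V] [InnerProductSpace ℝ V]
  {f : V → ℝ} {f' : V → V} {hess : V → V →L[ℝ] V}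

lemma hasDerivAt_add_smul (x u : V) (t : ℝ) : HasDerivAt (fun s : ℝ => x + s • u) u t := by
  simpa using ((hasDerivAt_id t).smul_const u).const_add x

lemma lineMap_le_of_convexOn {g : V → ℝ} (hg : ConvexOn ℝ univ g) (x u : V) {t : ℝ}
    (ht₀ : 0 ≤ t) (ht₁ : t ≤ 1) : g (x + t • (u - x)) ≤ AffineMap.lineMap (g x) (g u) t := by
  have hconv := hg.2 (mem_univ x) (mem_univ u) (sub_nonneg.2 ht₁) ht₀ (by ring)
  rwa [show (1 - t) • x + t • u = x + t • (u - x) by module, ← AffineMap.lineMap_apply_module]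
    at hconv

lemma norm_hess_le_of_lipschitz {L : ℝ} (hL : 0 ≤ L) (hhess : ∀ x, HasFDerivAt f' (hess x) x)
    (hlip : ∀ y z, ‖f' y - f' z‖ ≤ L * ‖y - z‖) (x : V) : ‖hess x‖ ≤ L := by
  have hlipW : LipschitzWith (Real.toNNReal L) f' := LipschitzWith.of_dist_le_mul fun y z => by
    rw [dist_eq_norm, dist_eq_norm, Real.coe_toNNReal L hL]; exact hlip y z
  simpa [Real.coe_toNNReal L hL] using (hhess x).le_of_lipschitz hlipW

lemma norm_sub_sub_hess_le {L : ℝ} (hhess : ∀ x, HasFDerivAt f' (hess x) x)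
    (hlip : ∀ y z, ‖hess y - hess z‖ ≤ L * ‖y - z‖) (x u : V) :
    ‖f' (x + u) - f' x - hess x u‖ ≤ L / 2 * ‖u‖ ^ 2 := by
  set ψ : ℝ → V := fun t => f' (x + t • u) - f' x - t • hess x u
  have hψ : ∀ t, HasDerivAt ψ (hess (x + t • u) u - hess x u) t := fun t =>
    (((hhess _).comp_hasDerivAt t (hasDerivAt_add_smul x u t)).sub_const (f' x)).sub
      (by simpa using (hasDerivAt_id t).smul_const (hess x u))
  have hbound : ∀ t ∈ Ico (0:ℝ) 1, ‖hess (x + t • u) u - hess x u‖ ≤ L * t * ‖u‖ ^ 2 :=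
    fun t ht => calc
      ‖hess (x + t • u) u - hess x u‖ ≤ ‖hess (x + t • u) - hess x‖ * ‖u‖ :=
        (hess (x + t • u) - hess x).le_opNorm u
      _ ≤ L * ‖t • u‖ * ‖u‖ := by gcongr; simpa using hlip (x + t • u) x
      _ = L * t * ‖u‖ ^ 2 := by rw [norm_smul, Real.norm_of_nonneg ht.1]; ring
  have hB : ∀ t, HasDerivAt (fun s : ℝ => L / 2 * s ^ 2 * ‖u‖ ^ 2) (L * t * ‖u‖ ^ 2) t :=
    fun t => (((hasDerivAt_pow 2 t).const_mul (L / 2)).mul_const (‖u‖ ^ 2)).congr_deriv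
      (by push_cast; ring)
  simpa [ψ] using image_norm_le_of_norm_deriv_right_le_deriv_boundary
    (fun t _ => (hψ t).continuousAt.continuousWithinAt) (fun t _ => (hψ t).hasDerivWithinAt)
    (by simp [ψ]) (fun t => hB t) hbound (right_mem_Icc.2 zero_le_one)

variable [CompleteSpace V]

lemma HasGradientAt.hasDerivAt_comp_add_smul {G x u : V} {t : ℝ}
    (hG : HasGradientAt f G (x + t • u)) :
    HasDerivAt (fun s : ℝ => f (x + s • u)) ⟪G, u⟫ t := by
  simpa [Function.comp_def] using hG.hasFDerivAt.comp_hasDerivAt t (hasDerivAt_add_smul x u t)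

lemma ConvexOn.add_inner_sub_le (hf : ConvexOn ℝ univ f) {x y G : V}
    (hG : HasGradientAt f G x) : f x + ⟪G, y - x⟫ ≤ f y := by
  have hφ : HasDerivAt (fun t : ℝ => AffineMap.lineMap (f x) (f y) t - f (x + t • (y - x)))
      (f y - f x - ⟪G, y - x⟫) 0 :=
    AffineMap.hasDerivAt_lineMap.sub (HasGradientAt.hasDerivAt_comp_add_smul (t := 0)
      (by simpa using hG))
  have := hφ.nonneg_of_forall_Ioc_le fun t ht => by
    simpa using lineMap_le_of_convexOn hf x y ht.1.le ht.2
  linarith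

lemma ConvexOn.inner_gradient_sub_nonneg (hf : ConvexOn ℝ univ f)
    {x y Gx Gy : V} (hx : HasGradientAt f Gx x) (hy : HasGradientAt f Gy y) :
    0 ≤ ⟪Gy - Gx, y - x⟫ := by
  have h₁ := hf.add_inner_sub_le hx (y := y)
  have h₂ := hf.add_inner_sub_le hy (y := x)
  rw [← neg_sub y x, inner_neg_right] at h₂
  rw [inner_sub_left]
  linarith

lemma ConvexOn.inner_hess_self_nonneg (hf : ConvexOn ℝ univ f)
    (hgrad : ∀ x, HasGradientAt f (f' x) x) (hhess : ∀ x, HasFDerivAt f' (hess x) x) (x u : V) :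
    0 ≤ ⟪hess x u, u⟫ := by
  have hφ : HasDerivAt (fun t : ℝ => ⟪f' (x + t • u), u⟫) ⟪hess x u, u⟫ 0 := by
    simpa using ((hhess (x + (0:ℝ) • u)).comp_hasDerivAt 0 (hasDerivAt_add_smul x u 0)).inner ℝ
      (hasDerivAt_const (0:ℝ) u)
  refine hφ.nonneg_of_forall_Ioc_le fun t ht => ?_
  have hmono := hf.inner_gradient_sub_nonneg (hgrad x) (hgrad (x + t • u))
  rw [add_sub_cancel_left, real_inner_smul_right, inner_sub_left] at hmono
  simp only [zero_smul, add_zero]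
  nlinarith [ht.1]

lemma inner_neg_gradient_le_of_isMin {g : V → ℝ} (hg : ConvexOn ℝ univ g) {G x u : V}
    (hG : HasGradientAt f G x) (hmin : ∀ z, f x + g x ≤ f z + g z) :
    ⟪-G, u - x⟫ ≤ g u - g x := by
  have hφ : HasDerivAt (fun t : ℝ => f (x + t • (u - x)) + AffineMap.lineMap (g x) (g u) t)
      (⟪G, u - x⟫ + (g u - g x)) 0 :=
    (HasGradientAt.hasDerivAt_comp_add_smul (t := 0) (by simpa using hG)).add
      AffineMap.hasDerivAt_lineMap
  have := hφ.nonneg_of_forall_Ioc_le fun t ht => by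
    simpa using (hmin _).trans (add_le_add_right (lineMap_le_of_convexOn hg x u ht.1.le ht.2) _)
  rw [inner_neg_left]
  linarith

lemma apply_add_le_of_inner_gradient_le (hgrad : ∀ x, HasGradientAt f (f' x) x) (x u : V)
    {B B' : ℝ → ℝ} (hB : ∀ t, HasDerivAt B (B' t) t) (h₀ : f x ≤ B 0)
    (hle : ∀ t ∈ Ico (0:ℝ) 1, ⟪f' (x + t • u), u⟫ ≤ B' t) : f (x + u) ≤ B 1 := by
  have hφ : ∀ t, HasDerivAt (fun s : ℝ => f (x + s • u)) ⟪f' (x + t • u), u⟫ t := fun t =>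
    (hgrad _).hasDerivAt_comp_add_smul
  simpa using image_le_of_deriv_right_le_deriv_boundary
    (fun t _ => (hφ t).continuousAt.continuousWithinAt) (fun t _ => (hφ t).hasDerivWithinAt)
    (by simpa using h₀) (fun t _ => (hB t).continuousAt.continuousWithinAt)
    (fun t _ => (hB t).hasDerivWithinAt) hle (right_mem_Icc.2 zero_le_one)

lemma apply_add_le_of_lipschitz_gradient {L : ℝ} (hgrad : ∀ x, HasGradientAt f (f' x) x)
    (hlip : ∀ y z, ‖f' y - f' z‖ ≤ L * ‖y - z‖) (x u : V) :
    f (x + u) ≤ f x + ⟪f' x, u⟫ + L / 2 * ‖u‖ ^ 2 := by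
  refine apply_add_le_of_inner_gradient_le hgrad x u
    (B := fun t => f x + t * ⟪f' x, u⟫ + t ^ 2 * (L / 2 * ‖u‖ ^ 2))
    (B' := fun t => ⟪f' x, u⟫ + L * t * ‖u‖ ^ 2)
    (fun t => ?_) (by simp) (fun t ht => ?_) |>.trans_eq (by ring)
  · have := (((hasDerivAt_id t).mul_const ⟪f' x, u⟫).const_add (f x)).add
      ((hasDerivAt_pow 2 t).mul_const (L / 2 * ‖u‖ ^ 2))
    exact this.congr_deriv (by simp; ring)
  · have h₁ := real_inner_le_norm (f' (x + t • u) - f' x) u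
    have h₂ := hlip (x + t • u) x
    rw [add_sub_cancel_left, norm_smul, Real.norm_of_nonneg ht.1] at h₂
    rw [inner_sub_left] at h₁
    nlinarith [norm_nonneg u]

lemma apply_add_le_of_lipschitz_hess {L : ℝ} (hgrad : ∀ x, HasGradientAt f (f' x) x)
    (hhess : ∀ x, HasFDerivAt f' (hess x) x) (hlip : ∀ y z, ‖hess y - hess z‖ ≤ L * ‖y - z‖)
    (x u : V) :
    f (x + u) ≤ f x + ⟪f' x, u⟫ + 1 / 2 * ⟪hess x u, u⟫ + L / 6 * ‖u‖ ^ 3 := by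
  refine apply_add_le_of_inner_gradient_le hgrad x u
    (B := fun t =>
      f x + t * ⟪f' x, u⟫ + t ^ 2 * (1 / 2 * ⟪hess x u, u⟫) + t ^ 3 * (L / 6 * ‖u‖ ^ 3))
    (B' := fun t => ⟪f' x, u⟫ + t * ⟪hess x u, u⟫ + L / 2 * t ^ 2 * ‖u‖ ^ 3)
    (fun t => ?_) (by simp) (fun t ht => ?_) |>.trans_eq (by ring)
  · have := ((((hasDerivAt_id t).mul_const ⟪f' x, u⟫).const_add (f x)).add
      ((hasDerivAt_pow 2 t).mul_const (1 / 2 * ⟪hess x u, u⟫))).add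
      ((hasDerivAt_pow 3 t).mul_const (L / 6 * ‖u‖ ^ 3))
    exact this.congr_deriv (by simp; ring)
  · have h₁ := real_inner_le_norm (f' (x + t • u) - f' x - hess x (t • u)) u
    have h₂ := norm_sub_sub_hess_le hhess hlip x (t • u)
    rw [norm_smul, Real.norm_of_nonneg ht.1, map_smul] at h₂
    rw [map_smul, inner_sub_left, inner_sub_left, real_inner_smul_left] at h₁
    nlinarith [mul_le_mul_of_nonneg_right h₂ (norm_nonneg u)]

end Calculus

section Prox

variable {V : Type*} [NormedAddCommGroup V] [InnerProductSpace ℝ V] [CompleteSpace V]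
  {g : V → ℝ} {prox : V → V}

def IsProxMap (g : V → ℝ) (prox : V → V) : Prop :=
  ∀ v u, 1 / 2 * ‖prox v - v‖ ^ 2 + g (prox v) ≤ 1 / 2 * ‖u - v‖ ^ 2 + g u

lemma hasGradientAt_half_norm_sub_sq (v z : V) :
    HasGradientAt (fun w => 1 / 2 * ‖w - v‖ ^ 2) (z - v) z :=
  (((hasFDerivAt_id z).sub_const v).norm_sq.const_mul (1 / 2 : ℝ)).congr_fderiv
    (ContinuousLinearMap.ext fun u => by simp)

lemma IsProxMap.inner_le (hg : ConvexOn ℝ univ g) (hprox : IsProxMap g prox) (v u : V) :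
    ⟪v - prox v, u - prox v⟫ ≤ g u - g (prox v) := by
  simpa using inner_neg_gradient_le_of_isMin hg (hasGradientAt_half_norm_sub_sq v (prox v))
    (hprox v) (u := u)

lemma IsProxMap.norm_sub_le (hg : ConvexOn ℝ univ g) (hprox : IsProxMap g prox) (a b : V) :
    ‖prox a - prox b‖ ≤ ‖a - b‖ := by
  have h₁ := hprox.inner_le hg a (prox b)
  have h₂ := hprox.inner_le hg b (prox a)
  have hfirm : ‖prox a - prox b‖ ^ 2 ≤ ⟪a - b, prox a - prox b⟫ := by
    rw [← real_inner_self_eq_norm_sq]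
    simp only [inner_sub_left, inner_sub_right, real_inner_comm] at h₁ h₂ ⊢
    linarith
  nlinarith [real_inner_le_norm (a - b) (prox a - prox b), norm_nonneg (prox a - prox b),
    norm_nonneg (a - b)]

lemma IsProxMap.apply_sub_eq_of_isMin {f : V → ℝ} {G x : V} (hg : ConvexOn ℝ univ g)
    (hprox : IsProxMap g prox) (hG : HasGradientAt f G x) (hmin : ∀ z, f x + g x ≤ f z + g z) :
    prox (x - G) = x := by
  have h₁ := hprox.inner_le hg (x - G) x
  have h₂ := inner_neg_gradient_le_of_isMin hg hG hmin (u := prox (x - G))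
  have hsq : ‖x - prox (x - G)‖ ^ 2 ≤ 0 := by
    rw [← real_inner_self_eq_norm_sq]
    simp only [inner_sub_left, inner_sub_right, inner_neg_left, real_inner_comm] at h₁ h₂ ⊢
    linarith
  exact (sub_eq_zero.1 (norm_eq_zero.1 (by nlinarith [norm_nonneg (x - prox (x - G))]))).symm

def proxGradResidual (f' : V → V) (prox : V → V) (y : V) : ℝ := ‖y - prox (y - f' y)‖

lemma proxGradResidual_le (hg : ConvexOn ℝ univ g) (hprox : IsProxMap g prox) (f' : V → V)
    (y v : V) : proxGradResidual f' prox y ≤ ‖y - prox v‖ + ‖v - (y - f' y)‖ :=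
  (norm_sub_le_norm_sub_add_norm_sub _ (prox v) _).trans <| by
    gcongr; exact hprox.norm_sub_le hg _ _

lemma proxGradResidual_le_of_isMin {f : V → ℝ} {f' : V → V} {L : ℝ} {x : V} (hg : ConvexOn ℝ univ g)
    (hprox : IsProxMap g prox) (hgrad : ∀ x, HasGradientAt f (f' x) x)
    (hlip : ∀ y z, ‖f' y - f' z‖ ≤ L * ‖y - z‖) (hmin : ∀ z, f x + g x ≤ f z + g z) (y : V) :
    proxGradResidual f' prox y ≤ (2 + L) * ‖y - x‖ := by
  have h := proxGradResidual_le hg hprox f' y (x - f' x)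
  rw [hprox.apply_sub_eq_of_isMin hg (hgrad x) hmin] at h
  have hv : x - f' x - (y - f' y) = -(y - x) + (f' y - f' x) := by abel
  rw [hv] at h
  linarith [norm_add_le (-(y - x)) (f' y - f' x), norm_neg (y - x), hlip y x]

end Prox

section IRPN

lemma min_le_pow_of_backtracking {β t₀ : ℝ} {P : ℝ → Prop} (hβ₀ : 0 < β) (hβ₁ : β ≤ 1)
    (hP : ∀ t, 0 < t → t ≤ 1 → t ≤ t₀ → P t) {i : ℕ} (hi : ∀ j < i, ¬ P (β ^ j)) :
    min 1 (β * t₀) ≤ β ^ i := by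
  rcases i with _ | j
  · simp
  · have hβj : t₀ < β ^ j := lt_of_not_ge fun h =>
      hi j j.lt_succ_self (hP _ (pow_pos hβ₀ j) (pow_le_one₀ hβ₀.le hβ₁) h)
    rw [pow_succ']
    exact (min_le_right _ _).trans (mul_le_mul_of_nonneg_left hβj.le hβ₀.le)

variable {V : Type*} [NormedAddCommGroup V] [InnerProductSpace ℝ V]
  {f g : V → ℝ} {f' : V → V} {hess : V → V →L[ℝ] V} {prox : V → V}

def linModel (f g : V → ℝ) (f' : V → V) (y z : V) : ℝ := f y + ⟪f' y, z - y⟫ + g z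

def SufficientDecrease (f g : V → ℝ) (f' : V → V) (θ : ℝ) (y d : V) (t : ℝ) : Prop :=
  θ * (linModel f g f' y y - linModel f g f' y (y + t • d)) ≤
    f y + g y - (f (y + t • d) + g (y + t • d))

lemma linModel_self (y : V) : linModel f g f' y y = f y + g y := by simp [linModel]

lemma mul_linModel_sub_le (hg : ConvexOn ℝ univ g) (y z : V) {t : ℝ} (ht₀ : 0 ≤ t)
    (ht₁ : t ≤ 1) :
    t * (linModel f g f' y y - linModel f g f' y z) ≤
      linModel f g f' y y - linModel f g f' y (y + t • (z - y)) := by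
  have hconv := lineMap_le_of_convexOn hg y z ht₀ ht₁
  rw [AffineMap.lineMap_apply_ring'] at hconv
  simp only [linModel, add_sub_cancel_left, sub_self, inner_zero_right, real_inner_smul_right]
  linarith

/-- One IRPN iteration from `y` in the case `ρ = 1`: `μ` is the regularization, `H` the
regularized Hessian, `z` the inexact subproblem solution `x̂` and `i` the backtracking exponent.
`inexact_model` is `q(z) - q(y) ≤ ζ (ℓ(z) - ℓ(y))` with the quadratic model `q` expanded. -/
structure IsIRPNStep (f g : V → ℝ) (f' : V → V) (hess : V → V →L[ℝ] V) (prox : V → V)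
    (θ ζ η β : ℝ) (y : V) (μ : ℝ) (H : V →L[ℝ] V) (z : V) (i : ℕ) : Prop where
  regHess_apply : ∀ u, H u = hess y u + μ • u
  inexact_residual : ‖z - prox (z - f' y - H (z - y))‖ ≤
    η * min (proxGradResidual f' prox y) (proxGradResidual f' prox y ^ 2)
  inexact_model : 1 / 2 * ⟪H (z - y), z - y⟫ ≤
    (1 - ζ) * (linModel f g f' y y - linModel f g f' y z)
  sufficientDecrease : SufficientDecrease f g f' θ y (z - y) (β ^ i)
  not_sufficientDecrease : ∀ j < i, ¬ SufficientDecrease f g f' θ y (z - y) (β ^ j)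

namespace IsIRPNStep

variable {θ ζ η β μ : ℝ} {y z : V} {H : V →L[ℝ] V} {i : ℕ}

lemma mul_norm_sq_le_inner (hs : IsIRPNStep f g f' hess prox θ ζ η β y μ H z i)
    (hpsd : ∀ u, 0 ≤ ⟪hess y u, u⟫) (u : V) : μ * ‖u‖ ^ 2 ≤ ⟪H u, u⟫ := by
  rw [hs.regHess_apply, inner_add_left, real_inner_smul_left, real_inner_self_eq_norm_sq]
  linarith [hpsd u]

lemma norm_apply_le (hs : IsIRPNStep f g f' hess prox θ ζ η β y μ H z i) {L : ℝ}
    (hnorm : ‖hess y‖ ≤ L) (hμ : 0 ≤ μ) (u : V) : ‖H u‖ ≤ (L + μ) * ‖u‖ := by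
  rw [hs.regHess_apply]
  calc ‖hess y u + μ • u‖ ≤ ‖hess y‖ * ‖u‖ + μ * ‖u‖ := by
        grw [norm_add_le, (hess y).le_opNorm, norm_smul, Real.norm_of_nonneg hμ]
    _ ≤ (L + μ) * ‖u‖ := by nlinarith [norm_nonneg u]

lemma mul_norm_sq_le (hs : IsIRPNStep f g f' hess prox θ ζ η β y μ H z i)
    (hpsd : ∀ u, 0 ≤ ⟪hess y u, u⟫) :
    μ * ‖z - y‖ ^ 2 ≤ 2 * (1 - ζ) * (linModel f g f' y y - linModel f g f' y z) := by
  linarith [hs.inexact_model, hs.mul_norm_sq_le_inner hpsd (z - y)]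

lemma linModel_sub_nonneg (hs : IsIRPNStep f g f' hess prox θ ζ η β y μ H z i)
    (hpsd : ∀ u, 0 ≤ ⟪hess y u, u⟫) (hμ : 0 ≤ μ) (hζ : ζ < 1) :
    0 ≤ linModel f g f' y y - linModel f g f' y z := by
  nlinarith [hs.mul_norm_sq_le hpsd, mul_nonneg hμ (sq_nonneg ‖z - y‖)]

lemma norm_inexact_le (hs : IsIRPNStep f g f' hess prox θ ζ η β y μ H z i) (hη : 0 ≤ η) :
    ‖z - prox (z - f' y - H (z - y))‖ ≤ η * proxGradResidual f' prox y :=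
  hs.inexact_residual.trans (mul_le_mul_of_nonneg_left (min_le_left _ _) hη)

lemma norm_inexact_le_sq (hs : IsIRPNStep f g f' hess prox θ ζ η β y μ H z i) (hη : 0 ≤ η) :
    ‖z - prox (z - f' y - H (z - y))‖ ≤ η * proxGradResidual f' prox y ^ 2 :=
  hs.inexact_residual.trans (mul_le_mul_of_nonneg_left (min_le_right _ _) hη)

variable [CompleteSpace V]

lemma sufficientDecrease_of_le (hs : IsIRPNStep f g f' hess prox θ ζ η β y μ H z i)
    {L t : ℝ} (hg : ConvexOn ℝ univ g) (hgrad : ∀ x, HasGradientAt f (f' x) x)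
    (hlip : ∀ y z, ‖f' y - f' z‖ ≤ L * ‖y - z‖) (hpsd : ∀ u, 0 ≤ ⟪hess y u, u⟫)
    (hθ : θ ≤ 1 / 2) (hζ₀ : 0 ≤ ζ) (hζ₁ : ζ < 1) (hμ : 0 ≤ μ)
    (ht₀ : 0 < t) (ht₁ : t ≤ 1) (htμ : 2 * L * t ≤ μ) :
    SufficientDecrease f g f' θ y (z - y) t := by
  have hF : f (y + t • (z - y)) + g (y + t • (z - y)) ≤
      linModel f g f' y (y + t • (z - y)) + L / 2 * (t * ‖z - y‖) ^ 2 := by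
    have := apply_add_le_of_lipschitz_gradient hgrad hlip y (t • (z - y))
    rw [norm_smul, Real.norm_of_nonneg ht₀.le] at this
    simp only [linModel, add_sub_cancel_left]
    linarith
  have hseg := mul_linModel_sub_le (f := f) (f' := f') hg y z ht₀.le ht₁
  have hΔ := hs.linModel_sub_nonneg hpsd hμ hζ₁
  have hquad := hs.mul_norm_sq_le hpsd
  have hL : L / 2 * (t * ‖z - y‖) ^ 2 ≤ t * (μ * ‖z - y‖ ^ 2) / 4 := by
    nlinarith [mul_le_mul_of_nonneg_right htμ (mul_nonneg ht₀.le (sq_nonneg ‖z - y‖))]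
  rw [SufficientDecrease]
  rw [linModel_self] at hseg hΔ hquad ⊢
  nlinarith [mul_nonneg ht₀.le hΔ, mul_le_mul_of_nonneg_left hquad ht₀.le]

lemma min_le_pow (hs : IsIRPNStep f g f' hess prox θ ζ η β y μ H z i) {L : ℝ}
    (hg : ConvexOn ℝ univ g) (hgrad : ∀ x, HasGradientAt f (f' x) x)
    (hlip : ∀ y z, ‖f' y - f' z‖ ≤ L * ‖y - z‖) (hpsd : ∀ u, 0 ≤ ⟪hess y u, u⟫) (hL : 0 < L)
    (hθ : θ ≤ 1 / 2) (hζ₀ : 0 ≤ ζ) (hζ₁ : ζ < 1) (hμ : 0 ≤ μ) (hβ₀ : 0 < β) (hβ₁ : β ≤ 1) :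
    min 1 (β * (μ / (2 * L))) ≤ β ^ i :=
  min_le_pow_of_backtracking hβ₀ hβ₁ (fun t ht₀ ht₁ htμ =>
    hs.sufficientDecrease_of_le hg hgrad hlip hpsd hθ hζ₀ hζ₁ hμ ht₀ ht₁
      (by rwa [le_div_iff₀ (by positivity), mul_comm] at htμ)) hs.not_sufficientDecrease

lemma decrease_ge (hs : IsIRPNStep f g f' hess prox θ ζ η β y μ H z i) {L : ℝ}
    (hg : ConvexOn ℝ univ g) (hgrad : ∀ x, HasGradientAt f (f' x) x)
    (hlip : ∀ y z, ‖f' y - f' z‖ ≤ L * ‖y - z‖) (hpsd : ∀ u, 0 ≤ ⟪hess y u, u⟫) (hL : 0 < L)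
    (hθ₀ : 0 ≤ θ) (hθ : θ ≤ 1 / 2) (hζ₀ : 0 ≤ ζ) (hζ₁ : ζ < 1) (hμ : 0 ≤ μ) (hβ₀ : 0 < β)
    (hβ₁ : β ≤ 1) :
    θ * min 1 (β * (μ / (2 * L))) * (μ * ‖z - y‖ ^ 2 / 2) ≤
      f y + g y - (f (y + β ^ i • (z - y)) + g (y + β ^ i • (z - y))) := by
  have hmin := hs.min_le_pow hg hgrad hlip hpsd hL hθ hζ₀ hζ₁ hμ hβ₀ hβ₁
  have hseg := mul_linModel_sub_le (f := f) (f' := f') hg y z (pow_nonneg hβ₀.le i)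
    (pow_le_one₀ hβ₀.le hβ₁)
  have hΔ := hs.linModel_sub_nonneg hpsd hμ hζ₁
  have hquad := hs.mul_norm_sq_le hpsd
  have hmin₀ : 0 ≤ min 1 (β * (μ / (2 * L))) := le_min zero_le_one (by positivity)
  have hstep : min 1 (β * (μ / (2 * L))) * (μ * ‖z - y‖ ^ 2 / 2) ≤
      β ^ i * (linModel f g f' y y - linModel f g f' y z) :=
    mul_le_mul hmin (by nlinarith) (by positivity) (pow_nonneg hβ₀.le i)
  refine le_trans ?_ hs.sufficientDecrease
  rw [mul_assoc]
  exact mul_le_mul_of_nonneg_left (hstep.trans hseg) hθ₀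

lemma proxGradResidual_le (hs : IsIRPNStep f g f' hess prox θ ζ η β y μ H z i) {L : ℝ}
    (hg : ConvexOn ℝ univ g) (hprox : IsProxMap g prox) (hnorm : ‖hess y‖ ≤ L) (hμ : 0 ≤ μ)
    (hη : 0 ≤ η) : (1 - η) * proxGradResidual f' prox y ≤ (2 + L + μ) * ‖z - y‖ := by
  set v := z - f' y - H (z - y)
  have h := _root_.proxGradResidual_le hg hprox f' y v
  have hv : v - (y - f' y) = (z - y) - H (z - y) := by simp only [v]; abel
  rw [hv] at h
  have hy : ‖y - prox v‖ ≤ ‖z - y‖ + ‖z - prox v‖ := by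
    simpa [norm_sub_rev y z] using norm_sub_le_norm_sub_add_norm_sub y z (prox v)
  linarith [norm_sub_le (z - y) (H (z - y)), hs.norm_apply_le hnorm hμ (z - y),
    hs.norm_inexact_le hη]

lemma proxGradResidual_trial_le (hs : IsIRPNStep f g f' hess prox θ ζ η β y μ H z i) {L : ℝ}
    (hg : ConvexOn ℝ univ g) (hprox : IsProxMap g prox) (hhess : ∀ x, HasFDerivAt f' (hess x) x)
    (hlip : ∀ y z, ‖hess y - hess z‖ ≤ L * ‖y - z‖) (hμ : 0 ≤ μ) :
    proxGradResidual f' prox z ≤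
      ‖z - prox (z - f' y - H (z - y))‖ + L / 2 * ‖z - y‖ ^ 2 + μ * ‖z - y‖ := by
  have h := _root_.proxGradResidual_le hg hprox f' z (z - f' y - H (z - y))
  have hv : z - f' y - H (z - y) - (z - f' z) =
      (f' (y + (z - y)) - f' y - hess y (z - y)) - μ • (z - y) := by
    rw [hs.regHess_apply, add_sub_cancel]; abel
  rw [hv] at h
  have hT := norm_sub_sub_hess_le hhess hlip y (z - y)
  have hμd : ‖μ • (z - y)‖ = μ * ‖z - y‖ := by rw [norm_smul, Real.norm_of_nonneg hμ]
  linarith [norm_sub_le (f' (y + (z - y)) - f' y - hess y (z - y)) (μ • (z - y))]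

/-- The cubic Taylor remainder is at most `(1 + (ζ - θ)) μ ‖d‖² / 2`: the regularization part
`μ ‖d‖² / 2` of `⟪H d, d⟫` pays for half of it and the slack `ζ - θ` of the model decrease for
the rest. -/
lemma sufficientDecrease_one (hs : IsIRPNStep f g f' hess prox θ ζ η β y μ H z i) {L : ℝ}
    (hgrad : ∀ x, HasGradientAt f (f' x) x)
    (hhess : ∀ x, HasFDerivAt f' (hess x) x) (hlip : ∀ y z, ‖hess y - hess z‖ ≤ L * ‖y - z‖)
    (hpsd : ∀ u, 0 ≤ ⟪hess y u, u⟫) (hθζ : θ ≤ ζ) (hζ₀ : 0 ≤ ζ) (hζ₁ : ζ < 1) (hμ : 0 ≤ μ)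
    (hd : L * ‖z - y‖ ≤ 3 * (1 + (ζ - θ)) * μ) :
    SufficientDecrease f g f' θ y (z - y) 1 := by
  have hT := apply_add_le_of_lipschitz_hess hgrad hhess hlip y (z - y)
  have hΔ := hs.linModel_sub_nonneg hpsd hμ hζ₁
  have hquad := hs.mul_norm_sq_le hpsd
  have hmodel := hs.inexact_model
  rw [hs.regHess_apply, inner_add_left, real_inner_smul_left, real_inner_self_eq_norm_sq]
    at hmodel
  have hcube : L / 6 * ‖z - y‖ ^ 3 ≤ (1 + (ζ - θ)) * μ * ‖z - y‖ ^ 2 / 2 := by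
    nlinarith [mul_le_mul_of_nonneg_right hd (sq_nonneg ‖z - y‖)]
  simp only [SufficientDecrease, one_smul, add_sub_cancel, linModel, sub_self,
    inner_zero_right] at hT hΔ hquad hmodel ⊢
  nlinarith [mul_le_mul_of_nonneg_left hquad (sub_nonneg.2 hθζ), mul_nonneg hζ₀ hΔ,
    mul_nonneg (sub_nonneg.2 hθζ) hΔ]

lemma mul_norm_sub_le_of_isMin (hs : IsIRPNStep f g f' hess prox θ ζ η β y μ H z i)
    {L₁ L₂ : ℝ} (hg : ConvexOn ℝ univ g) (hprox : IsProxMap g prox)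
    (hgrad : ∀ x, HasGradientAt f (f' x) x) (hhess : ∀ x, HasFDerivAt f' (hess x) x)
    (hlip : ∀ y z, ‖hess y - hess z‖ ≤ L₂ * ‖y - z‖) (hpsd : ∀ u, 0 ≤ ⟪hess y u, u⟫)
    (hnorm : ‖hess y‖ ≤ L₁) (hμ : 0 ≤ μ) {x : V} (hmin : ∀ w, f x + g x ≤ f w + g w) :
    μ * ‖z - y‖ ≤ 2 * μ * ‖x - y‖ + L₂ / 2 * ‖x - y‖ ^ 2 +
      (1 + L₁ + 2 * μ) * ‖z - prox (z - f' y - H (z - y))‖ := by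
  set v := z - f' y - H (z - y)
  set p := prox v
  set w := z - p
  set u := x - p
  -- With `u = x - p`, the prox inequality of the subproblem tested at `x` plus the optimality
  -- condition at `x` tested at `p` give `⟪H u, u⟫ ≤ ⟪e, u⟫`.
  set e := μ • (x - y) - (f' (y + (x - y)) - f' y - hess y (x - y)) + (H w - w)
  have hopt : ⟪v - p, u⟫ + ⟪f' x, u⟫ ≤ 0 := by
    have h₁ := hprox.inner_le hg v x
    have h₂ := inner_neg_gradient_le_of_isMin hg (hgrad x) hmin (u := p)
    rw [inner_neg_left, ← inner_neg_right, neg_sub] at h₂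
    linarith
  have hid : v - p + f' x = H u - e := by
    have hHd : H (z - y) = H (x - y) + H w - H u := by
      rw [← map_add, ← map_sub]; congr 1; simp only [w, u]; abel
    simp only [v, e, hHd, hs.regHess_apply (x - y), add_sub_cancel]
    simp only [w]
    abel
  have hu : μ * ‖u‖ ≤ ‖e‖ := by
    have hHu : μ * ‖u‖ ^ 2 ≤ ‖e‖ * ‖u‖ := by
      rw [← inner_add_left, hid, inner_sub_left] at hopt
      linarith [hs.mul_norm_sq_le_inner hpsd u, real_inner_le_norm e u]
    rcases (norm_nonneg u).eq_or_lt with h0 | hpos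
    · rw [← h0, mul_zero]; exact norm_nonneg e
    · nlinarith
  have he : ‖e‖ ≤ μ * ‖x - y‖ + L₂ / 2 * ‖x - y‖ ^ 2 + (1 + L₁ + μ) * ‖w‖ := by
    have hμa : ‖μ • (x - y)‖ = μ * ‖x - y‖ := by rw [norm_smul, Real.norm_of_nonneg hμ]
    have hHw : ‖H w - w‖ ≤ (1 + L₁ + μ) * ‖w‖ := by
      linarith [norm_sub_le (H w) w, hs.norm_apply_le hnorm hμ w]
    linarith [norm_add_le (μ • (x - y) - (f' (y + (x - y)) - f' y - hess y (x - y))) (H w - w),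
      norm_sub_le (μ • (x - y)) (f' (y + (x - y)) - f' y - hess y (x - y)),
      norm_sub_sub_hess_le hhess hlip y (x - y)]
  have hd : ‖z - y‖ ≤ ‖x - y‖ + ‖w‖ + ‖u‖ := by
    have : z - y = (x - y) + w - u := by simp only [w, u]; abel
    rw [this]
    linarith [norm_sub_le ((x - y) + w) u, norm_add_le (x - y) w]
  nlinarith [mul_le_mul_of_nonneg_left hd hμ]

lemma norm_sub_le_of_errorBound {c : ℝ}
    (hs : IsIRPNStep f g f' hess prox θ ζ η β y (c * proxGradResidual f' prox y) H z i)
    {L₁ L₂ κ : ℝ} (hg : ConvexOn ℝ univ g) (hprox : IsProxMap g prox)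
    (hgrad : ∀ x, HasGradientAt f (f' x) x) (hhess : ∀ x, HasFDerivAt f' (hess x) x)
    (hlip : ∀ y z, ‖hess y - hess z‖ ≤ L₂ * ‖y - z‖) (hpsd : ∀ u, 0 ≤ ⟪hess y u, u⟫)
    (hnorm : ‖hess y‖ ≤ L₁) (hL₁ : 0 ≤ L₁) (hL₂ : 0 ≤ L₂) (hc : 0 < c) (hκ : 0 ≤ κ)
    (hη₀ : 0 ≤ η) (hη₁ : η ≤ 1) (hcκ : κ * L₂ ≤ c) (hηκ : η ≤ κ ^ 2 * L₂ / (2 * (L₁ + 1)))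
    (hR : 0 < proxGradResidual f' prox y) (hsmall : L₂ * proxGradResidual f' prox y ≤ (ζ - θ) * c)
    {x : V} (hmin : ∀ w, f x + g x ≤ f w + g w) (hx : ‖x - y‖ ≤ κ * proxGradResidual f' prox y) :
    L₂ * ‖z - y‖ ≤ 3 * (1 + (ζ - θ)) * (c * proxGradResidual f' prox y) := by
  set R := proxGradResidual f' prox y
  have hstep := hs.mul_norm_sub_le_of_isMin hg hprox hgrad hhess hlip hpsd hnorm
    (by positivity) hmin
  have hw := hs.norm_inexact_le_sq hη₀
  have hcR : 0 < c * R := mul_pos hc hR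
  have hm : 0 ≤ ζ - θ := nonneg_of_mul_nonneg_left (hsmall.trans' (by positivity)) hc
  have hA : L₂ * ‖x - y‖ ≤ c * R := by nlinarith [mul_le_mul_of_nonneg_left hx hL₂]
  have hη : L₂ * (1 + L₁) * η ≤ c ^ 2 / 2 := by
    rw [le_div_iff₀ (by positivity)] at hηκ
    nlinarith [mul_le_mul hcκ hcκ (by positivity) hc.le]
  have hW : L₂ * ‖z - prox (z - f' y - H (z - y))‖ ≤ (ζ - θ) * c * R := by
    nlinarith [mul_le_mul_of_nonneg_left hw hL₂, mul_le_mul_of_nonneg_left hsmall (by positivity :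
      0 ≤ η * R), mul_le_mul_of_nonneg_left hη₁ (by positivity : 0 ≤ (ζ - θ) * c * R)]
  -- `2 c (κ L₂) + (κ L₂)² / 2 + (1 + L₁) η L₂ ≤ 3 c²`; the slack `ζ - θ` absorbs the `μ ‖w‖` term.
  have hkey : c * R * (L₂ * ‖z - y‖) ≤ c * R * (3 * (1 + (ζ - θ)) * (c * R)) := by
    nlinarith [mul_le_mul_of_nonneg_left hstep hL₂, mul_le_mul_of_nonneg_left hA hcR.le,
      mul_le_mul hA hA (by positivity) hcR.le, mul_le_mul_of_nonneg_left hw (by positivity :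
      0 ≤ L₂ * (1 + L₁)), mul_le_mul_of_nonneg_left hW hcR.le,
      mul_le_mul_of_nonneg_right hη (sq_nonneg R)]
  exact le_of_mul_le_mul_left hkey hcR

lemma decrease_ge_of_le {c L δ : ℝ}
    (hs : IsIRPNStep f g f' hess prox θ ζ η β y (c * proxGradResidual f' prox y) H z i)
    (hg : ConvexOn ℝ univ g) (hprox : IsProxMap g prox) (hgrad : ∀ x, HasGradientAt f (f' x) x)
    (hlip : ∀ y z, ‖f' y - f' z‖ ≤ L * ‖y - z‖) (hpsd : ∀ u, 0 ≤ ⟪hess y u, u⟫)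
    (hnorm : ‖hess y‖ ≤ L) (hL : 0 < L) (hθ₀ : 0 ≤ θ) (hθ : θ ≤ 1 / 2) (hζ₀ : 0 ≤ ζ)
    (hζ₁ : ζ < 1) (hη₀ : 0 ≤ η) (hη₁ : η ≤ 1) (hβ₀ : 0 < β) (hβ₁ : β ≤ 1) (hc : 0 < c)
    (hδ : 0 < δ) (hδR : δ ≤ proxGradResidual f' prox y) :
    θ * min 1 (β * (c * δ / (2 * L))) * (c * δ * ((1 - η) * δ / (2 + L + c * δ)) ^ 2 / 2) ≤
      f y + g y - (f (y + β ^ i • (z - y)) + g (y + β ^ i • (z - y))) := by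
  set R := proxGradResidual f' prox y
  have hμ : 0 ≤ c * R := mul_nonneg hc.le (hδ.le.trans hδR)
  have hres := hs.proxGradResidual_le hg hprox hnorm hμ hη₀
  have hd : (1 - η) * δ / (2 + L + c * δ) ≤ ‖z - y‖ := by
    rw [div_le_iff₀ (by positivity)]
    refine le_of_mul_le_mul_left ?_ (by nlinarith : 0 < 2 + L + c * R)
    nlinarith [mul_le_mul_of_nonneg_left hres (by positivity : 0 ≤ 2 + L + c * δ),
      mul_nonneg (mul_nonneg (sub_nonneg.2 hη₁) (by positivity : 0 ≤ 2 + L)) (sub_nonneg.2 hδR)]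
  refine le_trans ?_ (hs.decrease_ge hg hgrad hlip hpsd hL hθ₀ hθ hζ₀ hζ₁ hμ hβ₀ hβ₁)
  gcongr

lemma quadratic_of_errorBound {c : ℝ}
    (hs : IsIRPNStep f g f' hess prox θ ζ η β y (c * proxGradResidual f' prox y) H z i)
    {L₁ L₂ κ C₁ C₂ : ℝ} (hg : ConvexOn ℝ univ g) (hprox : IsProxMap g prox)
    (hgrad : ∀ x, HasGradientAt f (f' x) x) (hhess : ∀ x, HasFDerivAt f' (hess x) x)
    (hlip : ∀ y z, ‖hess y - hess z‖ ≤ L₂ * ‖y - z‖) (hpsd : ∀ u, 0 ≤ ⟪hess y u, u⟫)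
    (hnorm : ‖hess y‖ ≤ L₁) (hL₁ : 0 ≤ L₁) (hL₂ : 0 < L₂) (hc : 0 < c) (hκ : 0 ≤ κ)
    (hθζ : θ ≤ ζ) (hζ₀ : 0 ≤ ζ) (hζ₁ : ζ < 1) (hη₀ : 0 ≤ η) (hη₁ : η ≤ 1) (hcκ : κ * L₂ ≤ c)
    (hηκ : η ≤ κ ^ 2 * L₂ / (2 * (L₁ + 1))) (hC₁ : 3 * (1 + (ζ - θ)) * c ≤ L₂ * C₁)
    (hC₂ : η + L₂ / 2 * C₁ ^ 2 + c * C₁ ≤ C₂)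
    (hR : 0 < proxGradResidual f' prox y) (hsmall : L₂ * proxGradResidual f' prox y ≤ (ζ - θ) * c)
    {x : V} (hmin : ∀ w, f x + g x ≤ f w + g w) (hx : ‖x - y‖ ≤ κ * proxGradResidual f' prox y) :
    i = 0 ∧ ‖z - y‖ ≤ C₁ * proxGradResidual f' prox y ∧
      proxGradResidual f' prox z ≤ C₂ * proxGradResidual f' prox y ^ 2 := by
  set R := proxGradResidual f' prox y
  have hd := hs.norm_sub_le_of_errorBound hg hprox hgrad hhess hlip hpsd hnorm hL₁ hL₂.le hc hκ
    hη₀ hη₁ hcκ hηκ hR hsmall hmin hx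
  have hi : i = 0 := by
    by_contra hi
    exact hs.not_sufficientDecrease 0 (Nat.pos_of_ne_zero hi) (by
      simpa using hs.sufficientDecrease_one hgrad hhess hlip hpsd hθζ hζ₀ hζ₁ (by positivity) hd)
  have hD : ‖z - y‖ ≤ C₁ * R := by
    refine le_of_mul_le_mul_left ?_ hL₂
    nlinarith [mul_le_mul_of_nonneg_right hC₁ hR.le]
  refine ⟨hi, hD, ?_⟩
  have hres := hs.proxGradResidual_trial_le hg hprox hhess hlip (by positivity)
  have hw := hs.norm_inexact_le_sq hη₀
  have hD₀ : 0 ≤ C₁ * R := (norm_nonneg _).trans hD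
  nlinarith [mul_le_mul hD hD (norm_nonneg _) hD₀, mul_le_mul_of_nonneg_left hD hR.le,
    mul_le_mul_of_nonneg_right hC₂ (sq_nonneg R)]

end IsIRPNStep

end IRPN

section Sequences

lemma exists_le_of_forall_lt_imp_decrease {a R : ℕ → ℝ} {δ ω m : ℝ} (hω : 0 < ω)
    (hbdd : ∀ k, m ≤ a k) (hdec : ∀ k, δ < R k → a (k + 1) + ω ≤ a k) : ∃ k, R k ≤ δ := by
  by_contra! hR
  have htel : ∀ k : ℕ, a k + k * ω ≤ a 0 := fun k => by
    induction k with
    | zero => simp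
    | succ k ih => push_cast; linarith [hdec k (hR k)]
  obtain ⟨k, hk⟩ := exists_nat_gt ((a 0 - m) / ω)
  rw [div_lt_iff₀ hω] at hk
  linarith [htel k, hbdd k]

variable {M : Type*} [MetricSpace M] [CompleteSpace M]

lemma exists_tendsto_of_quadratic_residual {x : ℕ → M} {R : ℕ → ℝ} {C₁ C₂ δ : ℝ} {K : ℕ}
    (hR : ∀ k, 0 ≤ R k) (hC₁ : 0 ≤ C₁) (hC₂ : 0 ≤ C₂) (hδ : C₂ * δ ≤ 1 / 2) (hK : R K ≤ δ)
    (hquad : ∀ k, R k ≤ δ → R (k + 1) ≤ C₂ * R k ^ 2)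
    (hdist : ∀ k, R k ≤ δ → dist (x k) (x (k + 1)) ≤ C₁ * R k) :
    ∃ a, Tendsto x atTop (𝓝 a) ∧ Tendsto R atTop (𝓝 0) ∧
      ∀ k, K ≤ k → R k ≤ δ ∧ dist (x k) a ≤ 2 * C₁ * R k := by
  have hhalf : ∀ k, R k ≤ δ → R (k + 1) ≤ R k / 2 := fun k hk => by
    nlinarith [hquad k hk, mul_le_mul_of_nonneg_left hk (mul_nonneg hC₂ (hR k)), hR k]
  have hsmall : ∀ k, K ≤ k → R k ≤ δ := fun k hk => by
    induction k, hk using Nat.le_induction with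
    | base => exact hK
    | succ k _ ih => linarith [hhalf k ih, hR k]
  have hgeo : ∀ k, K ≤ k → ∀ j, R (j + k) ≤ R k * (1 / 2) ^ j := fun k hk j => by
    induction j with
    | zero => simp
    | succ j ih =>
      rw [Nat.add_right_comm, pow_succ, ← mul_assoc]
      linarith [hhalf (j + k) (hsmall (j + k) (by omega))]
  have hstep : ∀ k, K ≤ k → ∀ j, dist (x (j + k)) (x (j + 1 + k)) ≤ C₁ * R k * (1 / 2) ^ j :=
    fun k hk j => by
      rw [Nat.add_right_comm, mul_assoc]
      exact (hdist _ (hsmall _ (by omega))).trans (mul_le_mul_of_nonneg_left (hgeo k hk j) hC₁)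
  obtain ⟨a, ha⟩ := cauchySeq_tendsto_of_complete
    (cauchySeq_of_le_geometric _ _ (by norm_num) (hstep K le_rfl))
  have hlim : Tendsto x atTop (𝓝 a) := (tendsto_add_atTop_iff_nat K).1 ha
  refine ⟨a, hlim, ?_, fun k hk => ⟨hsmall k hk, ?_⟩⟩
  · refine (tendsto_add_atTop_iff_nat K).1 (squeeze_zero (fun j => hR _) (hgeo K le_rfl) ?_)
    simpa using (tendsto_pow_atTop_nhds_zero_of_lt_one (by norm_num : (0:ℝ) ≤ 1 / 2)
      (by norm_num)).const_mul (R K)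
  · have := dist_le_of_le_geometric_of_tendsto₀ _ _ (by norm_num) (hstep k hk)
      (hlim.comp (tendsto_add_atTop_nat k))
    rw [zero_add] at this
    norm_num at this
    linarith

lemma isClosed_setOf_forall_le {α : Type*} [TopologicalSpace α] {F : α → ℝ} (hF : Continuous F) :
    IsClosed {y | ∀ w, F y ≤ F w} := by
  simpa only [ofPred_forall] using isClosed_iInter fun w => isClosed_le hF continuous_const

lemma exists_tendsto_quadratic_of_residual {V : Type*} [NormedAddCommGroup V] [CompleteSpace V]
    {x : ℕ → V} {r : V → ℝ} {X : Set V} {C₁ C₂ δ κ L : ℝ} {K : ℕ} (hr : ∀ y, 0 ≤ r y)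
    (hC₁ : 0 < C₁) (hC₂ : 0 < C₂) (hL : 0 < L) (hδ : C₂ * δ ≤ 1 / 2) (hK : r (x K) ≤ δ)
    (hstep : ∀ k, r (x k) ≤ δ →
      dist (x k) (x (k + 1)) ≤ C₁ * r (x k) ∧ r (x (k + 1)) ≤ C₂ * r (x k) ^ 2)
    (hX : IsClosed X) (hXne : X.Nonempty)
    (hEB : ∀ k, r (x k) ≤ δ → infDist (x k) X ≤ κ * r (x k))
    (hres : ∀ a ∈ X, ∀ y, r y ≤ L * ‖y - a‖) :
    ∃ a ∈ X, Tendsto x atTop (𝓝 a) ∧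
      ∃ C, 0 < C ∧ ∃ k₀, ∀ k, k₀ ≤ k → ‖x (k + 1) - a‖ ≤ C * ‖x k - a‖ ^ 2 := by
  obtain ⟨a, hlim, hr₀, hnear⟩ := exists_tendsto_of_quadratic_residual (R := fun k => r (x k))
    (fun k => hr _) hC₁.le hC₂.le hδ hK (fun k hk => (hstep k hk).2) (fun k hk => (hstep k hk).1)
  have ha : a ∈ X := by
    refine (hX.mem_iff_infDist_zero hXne).2 (le_antisymm ?_ infDist_nonneg)
    refine le_of_tendsto_of_tendsto ((continuous_infDist_pt _).tendsto a |>.comp hlim)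
      (by simpa using hr₀.const_mul κ) ?_
    filter_upwards [eventually_ge_atTop K] with k hk
    exact hEB k (hnear k hk).1
  refine ⟨a, ha, hlim, 2 * C₁ * C₂ * L ^ 2, by positivity, K, fun k hk => ?_⟩
  have hnext := (hnear (k + 1) (by omega)).2
  rw [dist_eq_norm] at hnext
  calc ‖x (k + 1) - a‖ ≤ 2 * C₁ * r (x (k + 1)) := hnext
    _ ≤ 2 * C₁ * (C₂ * r (x k) ^ 2) := by gcongr; exact (hstep k (hnear k hk).1).2
    _ ≤ 2 * C₁ * (C₂ * (L * ‖x k - a‖) ^ 2) := by gcongr; exacts [hr _, hres a ha (x k)]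
    _ = 2 * C₁ * C₂ * L ^ 2 * ‖x k - a‖ ^ 2 := by ring

end Sequences

section Convergence

variable {V : Type*} [NormedAddCommGroup V] [InnerProductSpace ℝ V]
  {f g : V → ℝ} {f' : V → V} {hess : V → V →L[ℝ] V} {prox : V → V}
  {θ ζ η β c : ℝ} {x z : ℕ → V} {H : ℕ → V →L[ℝ] V} {i : ℕ → ℕ}

variable [CompleteSpace V]

lemma objective_le_initial {L : ℝ}
    (hs : ∀ k, IsIRPNStep f g f' hess prox θ ζ η β (x k) (c * proxGradResidual f' prox (x k))
      (H k) (z k) (i k))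
    (hx : ∀ k, x (k + 1) = x k + β ^ i k • (z k - x k))
    (hg : ConvexOn ℝ univ g) (hgrad : ∀ x, HasGradientAt f (f' x) x)
    (hlip : ∀ y z, ‖f' y - f' z‖ ≤ L * ‖y - z‖) (hpsd : ∀ y u, 0 ≤ ⟪hess y u, u⟫) (hL : 0 < L)
    (hθ₀ : 0 ≤ θ) (hθ : θ ≤ 1 / 2) (hζ₀ : 0 ≤ ζ) (hζ₁ : ζ < 1) (hβ₀ : 0 < β) (hβ₁ : β ≤ 1)
    (hc : 0 ≤ c) (k : ℕ) : f (x k) + g (x k) ≤ f (x 0) + g (x 0) := by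
  induction k with
  | zero => rfl
  | succ k ih =>
    have hμ : 0 ≤ c * proxGradResidual f' prox (x k) := mul_nonneg hc (norm_nonneg _)
    have hdec := (hs k).decrease_ge hg hgrad hlip (hpsd (x k)) hL hθ₀ hθ hζ₀ hζ₁ hμ hβ₀ hβ₁
    rw [← hx k] at hdec
    have : 0 ≤ θ * min 1 (β * (c * proxGradResidual f' prox (x k) / (2 * L))) *
        (c * proxGradResidual f' prox (x k) * ‖z k - x k‖ ^ 2 / 2) := by
      have : 0 ≤ min 1 (β * (c * proxGradResidual f' prox (x k) / (2 * L))) :=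
        le_min zero_le_one (by positivity)
      positivity
    linarith

lemma exists_proxGradResidual_le {L : ℝ}
    (hs : ∀ k, IsIRPNStep f g f' hess prox θ ζ η β (x k) (c * proxGradResidual f' prox (x k))
      (H k) (z k) (i k))
    (hx : ∀ k, x (k + 1) = x k + β ^ i k • (z k - x k))
    (hg : ConvexOn ℝ univ g) (hprox : IsProxMap g prox) (hgrad : ∀ x, HasGradientAt f (f' x) x)
    (hlip : ∀ y z, ‖f' y - f' z‖ ≤ L * ‖y - z‖) (hpsd : ∀ y u, 0 ≤ ⟪hess y u, u⟫)
    (hnorm : ∀ y, ‖hess y‖ ≤ L) (hL : 0 < L) (hθ₀ : 0 < θ) (hθ : θ ≤ 1 / 2) (hζ₀ : 0 ≤ ζ)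
    (hζ₁ : ζ < 1) (hη₀ : 0 ≤ η) (hη₁ : η < 1) (hβ₀ : 0 < β) (hβ₁ : β ≤ 1) (hc : 0 < c)
    {x₀ : V} (hmin : ∀ w, f x₀ + g x₀ ≤ f w + g w) {δ : ℝ} (hδ : 0 < δ) :
    ∃ k, proxGradResidual f' prox (x k) ≤ δ := by
  have hη : 0 < 1 - η := sub_pos.2 hη₁
  refine exists_le_of_forall_lt_imp_decrease (a := fun k => f (x k) + g (x k))
    (ω := θ * min 1 (β * (c * δ / (2 * L))) * (c * δ * ((1 - η) * δ / (2 + L + c * δ)) ^ 2 / 2))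
    (mul_pos (mul_pos hθ₀ (lt_min one_pos (by positivity))) (by positivity))
    (fun k => hmin (x k)) fun k hk => ?_
  have hdec := (hs k).decrease_ge_of_le hg hprox hgrad hlip (hpsd (x k)) (hnorm (x k)) hL hθ₀.le
    hθ hζ₀ hζ₁ hη₀ hη₁.le hβ₀ hβ₁ hc hδ hk.le
  rw [← hx k] at hdec
  linarith

theorem exists_tendsto_quadratic_of_isIRPNStep [ProperSpace V] {L₁ L₂ κ ε : ℝ} {X : Set V}
    (hs : ∀ k, IsIRPNStep f g f' hess prox θ ζ η β (x k) (c * proxGradResidual f' prox (x k))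
      (H k) (z k) (i k))
    (hx : ∀ k, x (k + 1) = x k + β ^ i k • (z k - x k))
    (hf : ConvexOn ℝ univ f) (hg : ConvexOn ℝ univ g) (hgcont : Continuous g)
    (hprox : IsProxMap g prox) (hgrad : ∀ x, HasGradientAt f (f' x) x)
    (hhess : ∀ x, HasFDerivAt f' (hess x) x) (hlip₁ : ∀ y z, ‖f' y - f' z‖ ≤ L₁ * ‖y - z‖)
    (hlip₂ : ∀ y z, ‖hess y - hess z‖ ≤ L₂ * ‖y - z‖) (hL₁ : 0 < L₁) (hL₂ : 0 < L₂)
    (hθ₀ : 0 < θ) (hθζ : θ < ζ) (hζ : ζ < 1 / 2) (hη₀ : 0 < η) (hη₁ : η < 1)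
    (hβ₀ : 0 < β) (hβ₁ : β < 1) (hc : 0 < c) (hκ : 0 < κ) (hε : 0 < ε)
    (hrpos : ∀ k, 0 < proxGradResidual f' prox (x k))
    (hX : X = {y | ∀ w, f y + g y ≤ f w + g w}) (hXne : X.Nonempty)
    (hEB : ∀ y, f y + g y ≤ f (x 0) + g (x 0) → proxGradResidual f' prox y ≤ ε →
      infDist y X ≤ κ * proxGradResidual f' prox y)
    (hcκ : κ * L₂ ≤ c) (hηκ : η ≤ κ ^ 2 * L₂ / (2 * (L₁ + 1))) :
    ∃ xstar ∈ X, Tendsto x atTop (𝓝 xstar) ∧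
      ∃ C, 0 < C ∧ ∃ k₀, ∀ k, k₀ ≤ k → ‖x (k + 1) - xstar‖ ≤ C * ‖x k - xstar‖ ^ 2 := by
  subst hX
  set r := proxGradResidual f' prox
  have hpsd := hf.inner_hess_self_nonneg hgrad hhess
  have hnorm := norm_hess_le_of_lipschitz hL₁.le hhess hlip₁
  have hdecr := objective_le_initial hs hx hg hgrad hlip₁ hpsd hL₁ hθ₀.le (by linarith)
    (by linarith) (by linarith) hβ₀ hβ₁.le hc.le
  have hclosed : IsClosed {y | ∀ w, f y + g y ≤ f w + g w} := isClosed_setOf_forall_le <|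
    (continuous_iff_continuousAt.2 fun y => (hgrad y).differentiableAt.continuousAt).add hgcont
  set C₁ := 3 * (1 + (ζ - θ)) * c / L₂
  set C₂ := η + L₂ / 2 * C₁ ^ 2 + c * C₁
  have hC₁ : 0 < C₁ := by positivity
  have hC₂ : 0 < C₂ := by positivity
  set δ := min ε (min ((ζ - θ) * c / L₂) (1 / (2 * C₂)))
  have hδ : 0 < δ := lt_min hε (lt_min (div_pos (mul_pos (by linarith) hc) hL₂) (by positivity))
  have hlocal : ∀ k, r (x k) ≤ δ →
      dist (x k) (x (k + 1)) ≤ C₁ * r (x k) ∧ r (x (k + 1)) ≤ C₂ * r (x k) ^ 2 := by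
    intro k hk
    obtain ⟨xb, hxb, hdist⟩ := hclosed.exists_infDist_eq_dist hXne (x k)
    have hEBk := hEB (x k) (hdecr k) (hk.trans (min_le_left _ _))
    have hsmall : L₂ * r (x k) ≤ (ζ - θ) * c := by
      have := hk.trans ((min_le_right _ _).trans (min_le_left _ _))
      rwa [le_div_iff₀ hL₂, mul_comm] at this
    obtain ⟨hi, hD, hr⟩ := (hs k).quadratic_of_errorBound (C₁ := C₁) (C₂ := C₂) hg hprox hgrad
      hhess hlip₂ (hpsd (x k)) (hnorm (x k)) hL₁.le hL₂ hc hκ.le hθζ.le (by linarith)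
      (by linarith) hη₀.le hη₁.le hcκ hηκ (mul_div_cancel₀ _ hL₂.ne').ge le_rfl (hrpos k) hsmall
      hxb (by rwa [norm_sub_rev, ← dist_eq_norm, ← hdist])
    rw [hx k, hi, pow_zero, one_smul, add_sub_cancel, dist_eq_norm, norm_sub_rev]
    exact ⟨hD, hr⟩
  obtain ⟨K, hK⟩ := exists_proxGradResidual_le hs hx hg hprox hgrad hlip₁ hpsd hnorm hL₁ hθ₀
    (by linarith) (by linarith) (by linarith) hη₀.le hη₁ hβ₀ hβ₁.le hc hXne.some_mem hδ
  have hC₂δ : C₂ * δ ≤ 1 / 2 := by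
    have : δ ≤ 1 / (2 * C₂) := (min_le_right _ _).trans (min_le_right _ _)
    rw [le_div_iff₀ (by positivity)] at this
    linarith
  exact exists_tendsto_quadratic_of_residual (r := r) (L := 2 + L₁) (fun _ => norm_nonneg _)
    hC₁ hC₂ (by positivity) hC₂δ hK hlocal hclosed hXne
    (fun k hk => hEB _ (hdecr k) (hk.trans (min_le_left _ _)))
    fun a ha => proxGradResidual_le_of_isMin hg hprox hgrad hlip₁ ha

end Convergence

abbrev E (n : ℕ) := EuclideanSpace ℝ (Fin n)

theorem stmt19_general {n : ℕ} (f g : E n → ℝ) (f' : E n → E n)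
    (hess : E n → E n →L[ℝ] E n) (prox : E n → E n)
    (hfconv : ConvexOn ℝ Set.univ f)
    (hgrad : ∀ x, HasGradientAt f (f' x) x)
    (hhess : ∀ x, HasFDerivAt f' (hess x) x)
    (hgconv : ConvexOn ℝ Set.univ g) (hgcont : Continuous g)
    (hprox : ∀ v u, (1/2) * ‖prox v - v‖ ^ 2 + g (prox v) ≤ (1/2) * ‖u - v‖ ^ 2 + g u)
    (F : E n → ℝ) (hF : ∀ y, F y = f y + g y)
    (X : Set (E n)) (hX : X = {y | ∀ z, F y ≤ F z}) (hXne : X.Nonempty)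
    (r : E n → ℝ) (hr : ∀ y, r y = ‖y - prox (y - f' y)‖)
    (L₁ : ℝ) (hL₁ : 0 < L₁) (hlip : ∀ y z, ‖f' y - f' z‖ ≤ L₁ * ‖y - z‖)
    -- IRPN parameters
    (θ ζ η c ρ β : ℝ)
    (hθ : θ ∈ Set.Ioo (0:ℝ) (1/2)) (hζ : ζ ∈ Set.Ioo θ (1/2))
    (hη : η ∈ Set.Ioo (0:ℝ) 1) (hc : 0 < c)
    (hβ : β ∈ Set.Ioo (0:ℝ) 1)
    -- IRPN iterates and auxiliary data
    (x xh : ℕ → E n) (μ : ℕ → ℝ) (H : ℕ → E n →L[ℝ] E n)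
    (ℓ q : ℕ → E n → ℝ) (rk : ℕ → E n → ℝ)
    (d : ℕ → E n) (i : ℕ → ℕ) (α : ℕ → ℝ)
    (hrpos : ∀ k, 0 < r (x k))
    (hμ : ∀ k, μ k = c * r (x k) ^ ρ)
    (hH : ∀ k, H k = hess (x k) + μ k • ContinuousLinearMap.id ℝ (E n))
    (hℓ : ∀ k y, ℓ k y = f (x k) + ⟪f' (x k), y - x k⟫ + g y)
    (hq : ∀ k y, q k y = ℓ k y + (1/2) * ⟪H k (y - x k), y - x k⟫)
    (hrk : ∀ k y, rk k y = ‖y - prox (y - f' (x k) - H k (y - x k))‖)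
    (hinex1 : ∀ k, rk k (xh k) ≤ η * min (r (x k)) (r (x k) ^ (1 + ρ)))
    (hinex2 : ∀ k, q k (xh k) - q k (x k) ≤ ζ * (ℓ k (xh k) - ℓ k (x k)))
    (hd : ∀ k, d k = xh k - x k)
    (hdesc : ∀ k, F (x k) - F (x k + β ^ i k • d k) ≥
      θ * (ℓ k (x k) - ℓ k (x k + β ^ i k • d k)))
    (hmin : ∀ k j, j < i k → ¬ (F (x k) - F (x k + β ^ j • d k) ≥
      θ * (ℓ k (x k) - ℓ k (x k + β ^ j • d k))))
    (hα : ∀ k, α k = β ^ i k)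
    (hstep : ∀ k, x (k + 1) = x k + α k • d k)
    -- Lipschitz Hessian
    (L₂ : ℝ) (hL₂ : 0 < L₂) (hlip2 : ∀ y z, ‖hess y - hess z‖ ≤ L₂ * ‖y - z‖)
    -- Luo-Tseng error bound
    (κ ε : ℝ) (hκ : 0 < κ) (hε : 0 < ε)
    (hEB : ∀ y : E n, F y ≤ F (x 0) → r y ≤ ε → Metric.infDist y X ≤ κ * r y)
    (hρ1 : ρ = 1) (hcκ : κ * L₂ ≤ c) (hηb : η ≤ κ ^ 2 * L₂ / (2 * (L₁ + 1))) :
    ∃ xstar ∈ X, Tendsto x atTop (nhds xstar) ∧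
      ∃ C : ℝ, 0 < C ∧ ∃ k₀ : ℕ, ∀ k, k₀ ≤ k →
        ‖x (k + 1) - xstar‖ ≤ C * ‖x k - xstar‖ ^ 2 := by
  subst hρ1
  obtain rfl : F = fun y => f y + g y := funext hF
  obtain rfl : r = proxGradResidual f' prox := funext hr
  obtain rfl : ℓ = fun k => linModel f g f' (x k) := funext fun k => funext (hℓ k)
  obtain rfl : d = fun k => xh k - x k := funext hd
  have hs : ∀ k, IsIRPNStep f g f' hess prox θ ζ η β (x k) (c * proxGradResidual f' prox (x k))
      (H k) (xh k) (i k) := fun k =>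
    { regHess_apply := fun u => by simp [hH k, hμ k]
      inexact_residual := by
        simpa only [hrk, one_add_one_eq_two, Real.rpow_two] using hinex1 k
      inexact_model := by
        have := hinex2 k
        simp only [hq, sub_self, inner_zero_right, mul_zero, add_zero] at this
        linarith
      sufficientDecrease := hdesc k
      not_sufficientDecrease := hmin k }
  exact exists_tendsto_quadratic_of_isIRPNStep hs (fun k => by rw [hstep k, hα k]) hfconv hgconv
    hgcont hprox hgrad hhess hlip hlip2 hL₁ hL₂ hθ.1 hζ.1 hζ.2 hη.1 hη.2 hβ.1 hβ.2 hc hκ hε hrpos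
    hX hXne hEB hcκ hηb

/-- Under the L₁-Lipschitz gradient, L₂-Lipschitz Hessian, Luo–Tseng
error bound, and IRPN iteration hypotheses, if `ρ = 1`, `c ≥ κL₂`, and
`η ≤ κ²L₂/(2(L₁+1))`, then `{xᵏ}` converges to some `x* ∈ X` at least
Q-quadratically: there are `C > 0` and `k₀` with
`‖x^{k+1} − x*‖ ≤ C·‖xᵏ − x*‖²` for all `k ≥ k₀`. -/
theorem stmt19 {n : ℕ} (f g : E n → ℝ) (f' : E n → E n)
    (hess : E n → E n →L[ℝ] E n) (prox : E n → E n)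
    (hfconv : ConvexOn ℝ Set.univ f) (hfC2 : ContDiff ℝ 2 f)
    (hgrad : ∀ x, HasGradientAt f (f' x) x)
    (hhess : ∀ x, HasFDerivAt f' (hess x) x)
    (hsa : ∀ x u w, ⟪hess x u, w⟫ = ⟪u, hess x w⟫)
    (hgconv : ConvexOn ℝ Set.univ g) (hgcont : Continuous g)
    (hprox : ∀ v u, (1/2) * ‖prox v - v‖ ^ 2 + g (prox v) ≤ (1/2) * ‖u - v‖ ^ 2 + g u)
    (F : E n → ℝ) (hF : ∀ y, F y = f y + g y)
    (X : Set (E n)) (hX : X = {y | ∀ z, F y ≤ F z}) (hXne : X.Nonempty)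
    (r : E n → ℝ) (hr : ∀ y, r y = ‖y - prox (y - f' y)‖)
    (L₁ : ℝ) (hL₁ : 0 < L₁) (hlip : ∀ y z, ‖f' y - f' z‖ ≤ L₁ * ‖y - z‖)
    -- IRPN parameters
    (θ ζ η c ρ β : ℝ)
    (hθ : θ ∈ Set.Ioo (0:ℝ) (1/2)) (hζ : ζ ∈ Set.Ioo θ (1/2))
    (hη : η ∈ Set.Ioo (0:ℝ) 1) (hc : 0 < c) (hρ : ρ ∈ Set.Icc (0:ℝ) 1)
    (hβ : β ∈ Set.Ioo (0:ℝ) 1)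
    -- IRPN iterates and auxiliary data
    (x xh : ℕ → E n) (μ : ℕ → ℝ) (H : ℕ → E n →L[ℝ] E n)
    (ℓ q : ℕ → E n → ℝ) (rk : ℕ → E n → ℝ)
    (d : ℕ → E n) (i : ℕ → ℕ) (α : ℕ → ℝ)
    (hrpos : ∀ k, 0 < r (x k))
    (hμ : ∀ k, μ k = c * r (x k) ^ ρ)
    (hH : ∀ k, H k = hess (x k) + μ k • ContinuousLinearMap.id ℝ (E n))
    (hℓ : ∀ k y, ℓ k y = f (x k) + ⟪f' (x k), y - x k⟫ + g y)
    (hq : ∀ k y, q k y = ℓ k y + (1/2) * ⟪H k (y - x k), y - x k⟫)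
    (hrk : ∀ k y, rk k y = ‖y - prox (y - f' (x k) - H k (y - x k))‖)
    (hinex1 : ∀ k, rk k (xh k) ≤ η * min (r (x k)) (r (x k) ^ (1 + ρ)))
    (hinex2 : ∀ k, q k (xh k) - q k (x k) ≤ ζ * (ℓ k (xh k) - ℓ k (x k)))
    (hd : ∀ k, d k = xh k - x k)
    (hdesc : ∀ k, F (x k) - F (x k + β ^ i k • d k) ≥
      θ * (ℓ k (x k) - ℓ k (x k + β ^ i k • d k)))
    (hmin : ∀ k j, j < i k → ¬ (F (x k) - F (x k + β ^ j • d k) ≥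
      θ * (ℓ k (x k) - ℓ k (x k + β ^ j • d k))))
    (hα : ∀ k, α k = β ^ i k)
    (hstep : ∀ k, x (k + 1) = x k + α k • d k)
    -- Lipschitz Hessian
    (L₂ : ℝ) (hL₂ : 0 < L₂) (hlip2 : ∀ y z, ‖hess y - hess z‖ ≤ L₂ * ‖y - z‖)
    -- Luo-Tseng error bound
    (κ ε : ℝ) (hκ : 0 < κ) (hε : 0 < ε)
    (hEB : ∀ y : E n, F y ≤ F (x 0) → r y ≤ ε → Metric.infDist y X ≤ κ * r y)
    (hρ1 : ρ = 1) (hcκ : κ * L₂ ≤ c) (hηb : η ≤ κ ^ 2 * L₂ / (2 * (L₁ + 1))) :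
    ∃ xstar ∈ X, Tendsto x atTop (nhds xstar) ∧
      ∃ C : ℝ, 0 < C ∧ ∃ k₀ : ℕ, ∀ k, k₀ ≤ k →
        ‖x (k + 1) - xstar‖ ≤ C * ‖x k - xstar‖ ^ 2 :=
  stmt19_general f g f' hess prox hfconv hgrad hhess hgconv hgcont hprox F hF X hX hXne r hr L₁ hL₁
    hlip θ ζ η c ρ β hθ hζ hη hc hβ x xh μ H ℓ q rk d i α hrpos hμ hH hℓ hq hrk hinex1 hinex2 hd
    hdesc hmin hα hstep L₂ hL₂ hlip2 κ ε hκ hε hEB hρ1 hcκ hηb
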